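/- arXiv:1109.3343 — 3 statements merged into one kernel-verified Lean document; each statement's English description precedes it below -/
import Mathlib

section
/- Logarithmic majorization and uniform integrability: let (a_{n,k})_{1≤k≤n} and (b_{n,k})_{1≤k≤n} be two triangular arrays of positive real numbers, and set μ_n := (1/n)∑_{k=1}^n δ_{a_{n,k}} and ν_n := (1/n)∑_{k=1}^n δ_{b_{n,k}}. Assume that for all sufficiently large n: (i) a_{n,1} ≥ … ≥ a_{n,n} and b_{n,1} ≥ … ≥ b_{n,n}; (ii) ∏_{i=1}^k a_{n,i} ≤ ∏_{i=1}^k b_{n,i} for every 1 ≤ k ≤ n; (iii) ∏_{i=k}^n b_{n,i} ≤ ∏_{i=k}^n a_{n,i} for every 1 ≤ k ≤ n; and that (iv) ν_n converges weakly to some probability measure ν on ℝ₊, and (v) log is uniformly integrable for (ν_n)_{n≥1}. Then: (j) log is uniformly integrable for (μ_n)_{n≥1} (in particular (μ_n) is tight); (jj) ∫ log(t) dμ_n(t) = ∫ log(t) dν_n(t) for all sufficiently large n, and both converge to ∫ log(t) dν(t) as n → ∞; and every weak accumulation point μ of (μ_n) satisfies ∫ log(t) dμ(t) = ∫ log(t)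 dν(t). -/
/-!
Taking logarithms, the hypotheses say that the row `log a_n` is majorized by `log b_n`: its
partial sums are smaller and the totals agree, which is already the equality of log-means.
Karamata's inequality for the convex penalties `y ↦ (|y| - t)⁺` then compares the log-tails,
and `|y| 1_{|y| > 2t} ≤ 2 (|y| - t)⁺ ≤ 2 |y| 1_{|y| > t}` turns this into uniform integrability
of `log` for `μ_n`. For the limits, weak convergence is applied to `log` clipped to `[-t, t]`:
uniform integrability makes the clipping error small uniformly in `n`, and Fatou's lemma shows
that the weak limit has no atom at `0` and integrates `log`.
-/

open MeasureTheory Filter Finset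

lemma ConvexOn.add_rightDeriv_mul_sub_le {S : Set ℝ} {f : ℝ → ℝ} (hf : ConvexOn ℝ S f)
    {x y : ℝ} (hx : x ∈ interior S) (hy : y ∈ S) :
    f x + derivWithin f (Set.Ioi x) x * (y - x) ≤ f y := by
  rcases lt_trichotomy x y with hxy | rfl | hyx
  · have h := hf.rightDeriv_le_slope_of_mem_interior hx hy hxy
    rw [slope_def_field, le_div_iff₀ (sub_pos.2 hxy)] at h
    linarith
  · simp
  · have h := hf.slope_le_leftDeriv_of_mem_interior hy hx hyx
    rw [slope_def_field, div_le_iff₀ (sub_pos.2 hyx)] at h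
    nlinarith [mul_le_mul_of_nonneg_right (hf.leftDeriv_le_rightDeriv_of_mem_interior hx)
      (sub_pos.2 hyx).le]

lemma Fin.sum_filter_val_lt_castSucc {M : Type*} [AddCommMonoid M] {n k : ℕ}
    (D : Fin (n + 1) → M) (hk : k ≤ n) :
    ∑ i ∈ univ.filter (fun i : Fin (n + 1) => (i : ℕ) < k), D i =
      ∑ i ∈ univ.filter (fun i : Fin n => (i : ℕ) < k), D i.castSucc := by
  rw [sum_filter, sum_filter, Fin.sum_univ_castSucc]
  simp [not_lt.2 hk]

lemma Fin.filter_val_lt_eq_univ {n k : ℕ} (hk : n ≤ k) :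
    univ.filter (fun i : Fin n => (i : ℕ) < k) = univ :=
  filter_true_of_mem fun i _ => i.isLt.trans_le hk

lemma Antitone.mul_sum_le_sum_mul_of_partial_sums_nonneg :
    ∀ {n : ℕ} {s D : Fin n → ℝ} {c : ℝ}, Antitone s → (∀ i, c ≤ s i) →
    (∀ k ≤ n, 0 ≤ ∑ i ∈ univ.filter (fun i : Fin n => (i : ℕ) < k), D i) →
    c * ∑ i, D i ≤ ∑ i, s i * D i
  | 0, _, _, _, _, _, _ => by simp
  | n + 1, s, D, c, hs, hc, hD => by
    have hpartial : ∀ k ≤ n, 0 ≤ ∑ i ∈ univ.filter (fun i : Fin n => (i : ℕ) < k),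
        D i.castSucc := fun k hk => by
      rw [← Fin.sum_filter_val_lt_castSucc D hk]; exact hD k (by omega)
    have ih := Antitone.mul_sum_le_sum_mul_of_partial_sums_nonneg
      (hs.comp_monotone Fin.strictMono_castSucc.monotone) (fun i => hs (Fin.le_last i.castSucc))
      hpartial
    have hall : 0 ≤ ∑ i : Fin n, D i.castSucc + D (Fin.last n) := by
      have h := hD (n + 1) le_rfl
      rwa [Fin.filter_val_lt_eq_univ le_rfl, Fin.sum_univ_castSucc] at h
    rw [Fin.sum_univ_castSucc, Fin.sum_univ_castSucc]
    calc c * (∑ i : Fin n, D i.castSucc + D (Fin.last n))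
        ≤ s (Fin.last n) * (∑ i : Fin n, D i.castSucc + D (Fin.last n)) :=
          mul_le_mul_of_nonneg_right (hc _) hall
      _ ≤ _ := by simp only [Function.comp_apply] at ih; linarith

theorem ConvexOn.sum_le_sum_of_majorization {f : ℝ → ℝ} (hf : ConvexOn ℝ Set.univ f) {n : ℕ}
    {α β : Fin n → ℝ} (hα : Antitone α)
    (hpartial : ∀ k ≤ n, ∑ i ∈ univ.filter (fun i : Fin n => (i : ℕ) < k), α i ≤
      ∑ i ∈ univ.filter (fun i : Fin n => (i : ℕ) < k), β i)
    (htotal : ∑ i, α i = ∑ i, β i) :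
    ∑ i, f (α i) ≤ ∑ i, f (β i) := by
  set r : ℝ → ℝ := fun x => derivWithin f (Set.Ioi x) x
  have hr : Monotone r := by
    simpa [MonotoneOn, Monotone] using hf.monotoneOn_rightDeriv
  obtain ⟨c, hc⟩ := (Set.finite_range (r ∘ α)).bddBelow
  have habel : c * ∑ i, (β i - α i) ≤ ∑ i, r (α i) * (β i - α i) :=
    (hr.comp_antitone hα).mul_sum_le_sum_mul_of_partial_sums_nonneg (fun i => hc ⟨i, rfl⟩)
      fun k hk => by simpa [sum_sub_distrib] using hpartial k hk
  have hzero : ∑ i, (β i - α i) = 0 := by rw [sum_sub_distrib, htotal, sub_self]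
  calc ∑ i, f (α i) ≤ ∑ i, (f (α i) + r (α i) * (β i - α i)) := by
        rw [hzero, mul_zero] at habel
        rw [sum_add_distrib]
        linarith
    _ ≤ ∑ i, f (β i) := sum_le_sum fun i _ =>
        hf.add_rightDeriv_mul_sub_le (by simp) (Set.mem_univ _)

noncomputable def tailSum {n : ℕ} (t : ℝ) (x : Fin n → ℝ) : ℝ :=
  ∑ i ∈ univ.filter (fun i => t < |x i|), |x i|

section tailSum

variable {n : ℕ} {t : ℝ} {x : Fin n → ℝ}

lemma tailSum_antitone (x : Fin n → ℝ) : Antitone fun t => tailSum t x :=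
  fun _ _ hst => sum_le_sum_of_subset_of_nonneg
    (monotone_filter_right _ fun _ _ h => hst.trans_lt h) fun _ _ _ => abs_nonneg _

lemma tailSum_eq_zero (h : ∀ i, |x i| ≤ t) : tailSum t x = 0 := by
  simp [tailSum, filter_false_of_mem fun i _ => not_lt.2 (h i)]

lemma sum_posPart_abs_sub_le_tailSum (ht : 0 ≤ t) (x : Fin n → ℝ) :
    ∑ i, (|x i| - t)⁺ ≤ tailSum t x := by
  rw [tailSum, sum_filter]
  refine sum_le_sum fun i _ => ?_
  split_ifs with h
  · exact sup_le (by linarith) (abs_nonneg _)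
  · exact (posPart_eq_zero.2 (by linarith)).le

lemma tailSum_two_mul_le (t : ℝ) (x : Fin n → ℝ) :
    tailSum (2 * t) x ≤ 2 * ∑ i, (|x i| - t)⁺ := by
  rw [tailSum, mul_sum]
  refine (sum_le_sum fun i hi => ?_).trans
    (sum_le_sum_of_subset_of_nonneg (filter_subset _ _) fun i _ _ => by positivity)
  have := (mem_filter.1 hi).2
  linarith [le_posPart (|x i| - t)]

end tailSum

/-- `empAvg f x = ∫ f d(n⁻¹ ∑ᵢ δ_{x i})`: empirical measures are only seen through these
integrals. -/
noncomputable def empAvg {n : ℕ} (f : ℝ → ℝ) (x : Fin n → ℝ) : ℝ := (n : ℝ)⁻¹ * ∑ i, f (x i)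

def UnifIntegrableEmpirical (g : ℝ → ℝ) {d : ℕ → ℕ} (c : (m : ℕ) → Fin (d m) → ℝ) : Prop :=
  ∀ ε : ℝ, 0 < ε → ∃ t : ℝ, ∀ m, (d m : ℝ)⁻¹ * tailSum t (fun i => g (c m i)) ≤ ε

def TendstoEmpirical {d : ℕ → ℕ} (c : (m : ℕ) → Fin (d m) → ℝ) (ν : Measure ℝ) : Prop :=
  ∀ f : BoundedContinuousFunction ℝ ℝ,
    Tendsto (fun m => empAvg f (c m)) atTop (nhds (∫ x, f x ∂ν))

namespace UnifIntegrableEmpirical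

variable {g : ℝ → ℝ} {d : ℕ → ℕ} {c c' : (m : ℕ) → Fin (d m) → ℝ}

lemma eventually (h : UnifIntegrableEmpirical g c) {ε : ℝ} (hε : 0 < ε) :
    ∀ᶠ t in atTop, ∀ m, (d m : ℝ)⁻¹ * tailSum t (fun i => g (c m i)) ≤ ε := by
  obtain ⟨t₀, ht₀⟩ := h ε hε
  filter_upwards [eventually_ge_atTop t₀] with t ht m
  exact (mul_le_mul_of_nonneg_left (tailSum_antitone _ ht) (by positivity)).trans (ht₀ m)

/-- Finitely many rows are harmless: their entries are bounded. -/
lemma of_eventually (h : ∀ ε : ℝ, 0 < ε → ∃ t : ℝ,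
      ∀ᶠ m in atTop, (d m : ℝ)⁻¹ * tailSum t (fun i => g (c m i)) ≤ ε) :
    UnifIntegrableEmpirical g c := by
  intro ε hε
  obtain ⟨t, ht⟩ := h ε hε
  obtain ⟨N, hN⟩ := eventually_atTop.1 ht
  set B := ∑ m ∈ range N, ∑ i, |g (c m i)|
  refine ⟨max t B, fun m => ?_⟩
  rcases lt_or_ge m N with hm | hm
  · rw [tailSum_eq_zero fun i => ?_, mul_zero]
    · exact hε.le
    calc |g (c m i)| ≤ ∑ j, |g (c m j)| := single_le_sum (f := fun j => |g (c m j)|)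
          (fun j _ => abs_nonneg _) (mem_univ i)
      _ ≤ B := single_le_sum (f := fun m => ∑ i, |g (c m i)|)
          (fun m _ => sum_nonneg fun i _ => abs_nonneg _) (mem_range.2 hm)
      _ ≤ max t B := le_max_right _ _
  · exact (mul_le_mul_of_nonneg_left (tailSum_antitone _ (le_max_left t B))
      (by positivity)).trans (hN m hm)

lemma of_sum_posPart_le (h : UnifIntegrableEmpirical g c')
    (hle : ∀ᶠ m in atTop, ∀ t : ℝ, ∑ i, (|g (c m i)| - t)⁺ ≤ ∑ i, (|g (c' m i)| - t)⁺) :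
    UnifIntegrableEmpirical g c := by
  refine of_eventually fun ε hε => ?_
  obtain ⟨t, ht, hc'⟩ := ((h.eventually (half_pos hε)).and (eventually_ge_atTop 0)).exists
  refine ⟨2 * t, hle.mono fun m hm => ?_⟩
  calc (d m : ℝ)⁻¹ * tailSum (2 * t) (fun i => g (c m i))
      ≤ (d m : ℝ)⁻¹ * (2 * tailSum t (fun i => g (c' m i))) := by
        gcongr
        exact (tailSum_two_mul_le t _).trans (by
          gcongr; exact (hm t).trans (sum_posPart_abs_sub_le_tailSum hc' _))
    _ = 2 * ((d m : ℝ)⁻¹ * tailSum t (fun i => g (c' m i))) := by ring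
    _ ≤ ε := by linarith [ht m]

end UnifIntegrableEmpirical

/-- `log x` clipped to `[-s, s]`; taking `max |x| (exp (-s))` makes it continuous at `0`,
where `Real.log` has the junk value `log 0 = 0`. -/
noncomputable def truncLog (s x : ℝ) : ℝ :=
  max (-s) (min s (Real.log (max |x| (Real.exp (-s)))))

section truncLog

variable {s x : ℝ}

lemma continuous_truncLog (s : ℝ) : Continuous (truncLog s) := by
  unfold truncLog
  have : Continuous fun x : ℝ => Real.log (max |x| (Real.exp (-s))) :=
    (continuous_abs.max continuous_const).log fun x =>
      ((Real.exp_pos _).trans_le (le_max_right _ _)).ne'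
  fun_prop

lemma abs_truncLog_le (hs : 0 ≤ s) (x : ℝ) : |truncLog s x| ≤ s :=
  abs_le.2 ⟨le_max_left _ _, max_le (by linarith) (min_le_left _ _)⟩

lemma truncLog_zero (s : ℝ) : truncLog s 0 = -s := by
  rw [truncLog, abs_zero, max_eq_right (Real.exp_pos _).le, Real.log_exp]
  grind

lemma truncLog_of_ne_zero (hx : x ≠ 0) : truncLog s x = max (-s) (min s (Real.log x)) := by
  unfold truncLog
  rcases le_total (Real.exp (-s)) |x| with h | h
  · rw [max_eq_left h, Real.log_abs]
  · have : Real.log x ≤ -s := by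
      simpa [Real.log_abs] using Real.log_le_log (abs_pos.2 hx) h
    rw [max_eq_right h, Real.log_exp]
    grind

lemma truncLog_eventually_eq (hx : x ≠ 0) : ∀ᶠ s in atTop, truncLog s x = Real.log x := by
  filter_upwards [eventually_ge_atTop |Real.log x|] with s hs
  rw [truncLog_of_ne_zero hx, min_eq_right (le_of_abs_le hs),
    max_eq_right (neg_le_of_abs_le hs)]

lemma abs_truncLog_le_abs_log (hs : 0 ≤ s) (hx : x ≠ 0) : |truncLog s x| ≤ |Real.log x| := by
  rw [truncLog_of_ne_zero hx]
  grind

lemma abs_log_sub_truncLog_le (hx : x ≠ 0) : |Real.log x - truncLog s x| ≤ (|Real.log x| - s)⁺ := by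
  rw [truncLog_of_ne_zero hx, posPart_def]
  grind

lemma tendsto_ofReal_posPart_abs_truncLog_sub {t : ℝ} (ht : 0 ≤ t) (x : ℝ) :
    Tendsto (fun M : ℕ => ENNReal.ofReal (|truncLog (t + M) x| - t)⁺) atTop
      (nhds (if x = 0 then ⊤ else ENNReal.ofReal (|Real.log x| - t))) := by
  by_cases hx : x = 0
  · have hM : ∀ M : ℕ, ENNReal.ofReal (|truncLog (t + M) 0| - t)⁺ = M := fun M => by
      rw [truncLog_zero, abs_neg, abs_of_nonneg (by positivity), add_sub_cancel_left,
        posPart_eq_self.2 (Nat.cast_nonneg _), ENNReal.ofReal_natCast]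
    simp only [hx, hM, if_true]
    exact ENNReal.tendsto_nat_nhds_top
  · have hev : ∀ᶠ M : ℕ in atTop, truncLog (t + M) x = Real.log x :=
      (tendsto_atTop_add_const_left _ t tendsto_natCast_atTop_atTop).eventually
        (truncLog_eventually_eq hx)
    refine tendsto_const_nhds.congr' (hev.mono fun M hM => ?_)
    simp [hx, hM, posPart_def]

end truncLog

lemma abs_empAvg_log_sub_truncLog_le {n : ℕ} {x : Fin n → ℝ} {t : ℝ} (ht : 0 ≤ t)
    (hx : ∀ i, x i ≠ 0) :
    |empAvg Real.log x - empAvg (truncLog t) x| ≤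
      (n : ℝ)⁻¹ * tailSum t (fun i => Real.log (x i)) := by
  rw [empAvg, empAvg, ← mul_sub, ← sum_sub_distrib, abs_mul, abs_inv, Nat.abs_cast]
  gcongr
  calc |∑ i, (Real.log (x i) - truncLog t (x i))|
      ≤ ∑ i, |Real.log (x i) - truncLog t (x i)| := abs_sum_le_sum_abs _ _
    _ ≤ ∑ i, (|Real.log (x i)| - t)⁺ := sum_le_sum fun i _ => abs_log_sub_truncLog_le (hx i)
    _ ≤ tailSum t (fun i => Real.log (x i)) := sum_posPart_abs_sub_le_tailSum ht _

lemma integrable_of_lintegral_ofReal_abs_sub_ne_top {α : Type*} [MeasurableSpace α]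
    {μ : Measure α} [IsFiniteMeasure μ] {f : α → ℝ} (hf : AEStronglyMeasurable f μ) (t : ℝ)
    (h : ∫⁻ x, ENNReal.ofReal (|f x| - t) ∂μ ≠ ⊤) : Integrable f μ := by
  refine ⟨hf, ?_⟩
  rw [hasFiniteIntegral_iff_norm]
  calc ∫⁻ x, ENNReal.ofReal ‖f x‖ ∂μ
      ≤ ∫⁻ x, (ENNReal.ofReal (|f x| - t) + ENNReal.ofReal t) ∂μ :=
        lintegral_mono fun x => (ENNReal.ofReal_le_ofReal (by simp)).trans ENNReal.ofReal_add_le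
    _ = ∫⁻ x, ENNReal.ofReal (|f x| - t) ∂μ + ENNReal.ofReal t * μ Set.univ := by
        rw [lintegral_add_right _ measurable_const, lintegral_const]
    _ < ⊤ := ENNReal.add_lt_top.2 ⟨h.lt_top, ENNReal.mul_lt_top ENNReal.ofReal_lt_top
        (measure_lt_top _ _)⟩

namespace TendstoEmpirical

variable {d : ℕ → ℕ} {c : (m : ℕ) → Fin (d m) → ℝ} {ν : Measure ℝ} [IsFiniteMeasure ν]

/-- Fatou's lemma for the bounded continuous functions `(|truncLog (t + M) x| - t)⁺`, which tend
to `(|log x| - t)⁺` off `0` and equal `M` at `0`. -/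
lemma measure_zero_eq_zero_and_lintegral_le (hW : TendstoEmpirical c ν) (hc : ∀ m i, c m i ≠ 0)
    {t ε : ℝ} (ht : 0 ≤ t) (hε : ∀ m, (d m : ℝ)⁻¹ * tailSum t (fun i => Real.log (c m i)) ≤ ε) :
    ν {0} = 0 ∧ ∫⁻ x, ENNReal.ofReal (|Real.log x| - t) ∂ν ≤ ENNReal.ofReal ε := by
  set G : ℝ → ENNReal := fun x => if x = 0 then ⊤ else ENNReal.ofReal (|Real.log x| - t)
  let ψ : ℕ → BoundedContinuousFunction ℝ ℝ := fun M =>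
    .ofNormedAddCommGroup (fun x => (|truncLog (t + M) x| - t)⁺)
      (continuous_posPart.comp (((continuous_truncLog _).abs).sub continuous_const)) M
      fun x => by
        rw [Real.norm_of_nonneg (posPart_nonneg _), posPart_def]
        exact sup_le (by linarith [abs_truncLog_le (by positivity : 0 ≤ t + M) x])
          (Nat.cast_nonneg M)
  have hψ_int : ∀ M, ∫ x, ψ M x ∂ν ≤ ε := fun M => by
    refine le_of_tendsto' (hW (ψ M)) fun m => (hε m).trans' ?_
    refine mul_le_mul_of_nonneg_left ?_ (by positivity)
    refine (sum_le_sum fun i _ => ?_).trans (sum_posPart_abs_sub_le_tailSum ht _)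
    exact posPart_mono (by linarith [abs_truncLog_le_abs_log (by positivity : 0 ≤ t + M) (hc m i)])
  have hψ_lim : ∀ x, Tendsto (fun M => ENNReal.ofReal (ψ M x)) atTop (nhds (G x)) :=
    tendsto_ofReal_posPart_abs_truncLog_sub ht
  have hG : ∫⁻ x, G x ∂ν ≤ ENNReal.ofReal ε :=
    calc ∫⁻ x, G x ∂ν = ∫⁻ x, atTop.liminf (fun M => ENNReal.ofReal (ψ M x)) ∂ν := by
          simp_rw [fun x => (hψ_lim x).liminf_eq]
      _ ≤ atTop.liminf (fun M => ∫⁻ x, ENNReal.ofReal (ψ M x) ∂ν) :=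
          lintegral_liminf_le fun M => (ψ M).continuous.measurable.ennreal_ofReal
      _ ≤ ENNReal.ofReal ε := by
          refine (liminf_le_liminf (.of_forall fun M => ?_)).trans_eq (liminf_const _)
          rw [← ofReal_integral_eq_lintegral_ofReal ((ψ M).integrable ν)
            (.of_forall fun x => posPart_nonneg _)]
          exact ENNReal.ofReal_le_ofReal (hψ_int M)
  refine ⟨by_contra fun h0 => ENNReal.ofReal_ne_top (top_le_iff.1 (hG.trans' ?_)),
    (lintegral_mono fun x => ?_).trans hG⟩
  · calc ⊤ = ⊤ * ν {0} := (ENNReal.top_mul h0).symm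
      _ = ∫⁻ x in {0}, G x ∂ν := by simp [G, mul_comm]
      _ ≤ ∫⁻ x, G x ∂ν := setLIntegral_le_lintegral _ _
  · by_cases hx : x = 0 <;> simp [G, hx]

theorem tendsto_empAvg_log (hW : TendstoEmpirical c ν) (hc : ∀ m i, c m i ≠ 0)
    (hUI : UnifIntegrableEmpirical Real.log c) :
    Tendsto (fun m => empAvg Real.log (c m)) atTop (nhds (∫ x, Real.log x ∂ν)) := by
  obtain ⟨t₀, ht₀, ht₀0⟩ := ((hUI.eventually one_pos).and (eventually_ge_atTop 0)).exists
  obtain ⟨hν0, hlint⟩ := hW.measure_zero_eq_zero_and_lintegral_le hc ht₀0 ht₀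
  have hlog : Integrable Real.log ν := integrable_of_lintegral_ofReal_abs_sub_ne_top
    Real.measurable_log.aestronglyMeasurable t₀ (ne_top_of_le_ne_top ENNReal.ofReal_ne_top hlint)
  have hae : ∀ᵐ x ∂ν, x ≠ 0 := measure_eq_zero_iff_ae_notMem.1 hν0
  refine TendstoUniformly.tendsto_of_eventually_tendsto (p := atTop)
    (F := fun t m => empAvg (truncLog t) (c m)) (L := fun t => ∫ x, truncLog t x ∂ν) ?_ ?_ ?_
  · rw [Metric.tendstoUniformly_iff]
    intro ε hε
    filter_upwards [hUI.eventually (half_pos hε), eventually_ge_atTop 0] with t ht ht0 m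
    rw [Real.dist_eq]
    exact (abs_empAvg_log_sub_truncLog_le ht0 (hc m)).trans_lt (by linarith [ht m])
  · filter_upwards [eventually_ge_atTop 0] with t ht
    exact hW (.ofNormedAddCommGroup (truncLog t) (continuous_truncLog t) t
      (abs_truncLog_le ht))
  · exact tendsto_integral_filter_of_dominated_convergence (fun x => |Real.log x|)
      (.of_forall fun t => (continuous_truncLog t).aestronglyMeasurable)
      ((eventually_ge_atTop 0).mono fun t ht => hae.mono fun x hx =>
        abs_truncLog_le_abs_log ht hx) hlog.abs
      (hae.mono fun x hx => tendsto_nhds_of_eventually_eq (truncLog_eventually_eq hx))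

end TendstoEmpirical

lemma convexOn_posPart_abs_sub (t : ℝ) : ConvexOn ℝ Set.univ fun y : ℝ => (|y| - t)⁺ := by
  have h : (fun y : ℝ => (|y| - t)⁺) = (fun y => ‖y‖ + -t) ⊔ fun _ => 0 := by
    ext y; simp [posPart_def, sub_eq_add_neg]
  rw [h]
  exact (convexOn_univ_norm.add_const _).sup (convexOn_const _ convex_univ)

lemma sum_posPart_abs_log_sub_le_of_prod_le {n : ℕ} {a b : Fin n → ℝ} (ha : ∀ i, 0 < a i)
    (hb : ∀ i, 0 < b i) (hmono : Antitone a)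
    (hmaj : ∀ k : ℕ, ∏ i ∈ univ.filter (fun i : Fin n => (i : ℕ) < k), a i ≤
      ∏ i ∈ univ.filter (fun i : Fin n => (i : ℕ) < k), b i)
    (hprod : ∏ i, a i = ∏ i, b i) (t : ℝ) :
    ∑ i, (|Real.log (a i)| - t)⁺ ≤ ∑ i, (|Real.log (b i)| - t)⁺ := by
  have hsum : ∀ (f : Fin n → ℝ), (∀ i, 0 < f i) → ∀ s : Finset (Fin n),
      ∑ i ∈ s, Real.log (f i) = Real.log (∏ i ∈ s, f i) :=
    fun f hf s => (Real.log_prod fun i _ => (hf i).ne').symm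
  refine (convexOn_posPart_abs_sub t).sum_le_sum_of_majorization
    (fun i j hij => Real.log_le_log (ha j) (hmono hij)) (fun k _ => ?_) ?_
  · rw [hsum a ha, hsum b hb]
    exact Real.log_le_log (prod_pos fun i _ => ha i) (hmaj k)
  · rw [hsum a ha, hsum b hb, hprod]

/-- Logarithmic majorization and uniform integrability (lemma of Tao and Vu, revisited):
for two triangular arrays of positive reals `a` and `b` such that, for `n` large enough,
both rows are non-increasing, the partial products of `a` are log-majorized by those of
`b` (from above and from below), and such that the empirical measures `ν_n` of `b`
converge weakly to a probability measure `ν` with `log` uniformly integrable for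
`(ν_n)`, one gets: `log` is uniformly integrable for the empirical measures `μ_n` of `a`,
the log-means of `a` and `b` coincide for `n` large and converge to `∫ log dν`, and
every weak accumulation point `μ` of `(μ_n)` satisfies `∫ log dμ = ∫ log dν`. -/
theorem log_majorization_uniform_integrability
    (a b : (n : ℕ) → Fin n → ℝ)
    (ha_pos : ∀ n i, 0 < a n i) (hb_pos : ∀ n i, 0 < b n i)
    (h_mono : ∀ᶠ n in atTop, Antitone (a n) ∧ Antitone (b n))
    (h_maj : ∀ᶠ n in atTop, ∀ k : ℕ,
      ∏ i ∈ Finset.univ.filter (fun i : Fin n => (i : ℕ) < k), a n i ≤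
        ∏ i ∈ Finset.univ.filter (fun i : Fin n => (i : ℕ) < k), b n i)
    (h_maj' : ∀ᶠ n in atTop, ∀ k : ℕ,
      ∏ i ∈ Finset.univ.filter (fun i : Fin n => k ≤ (i : ℕ)), b n i ≤
        ∏ i ∈ Finset.univ.filter (fun i : Fin n => k ≤ (i : ℕ)), a n i)
    (ν : Measure ℝ) [IsProbabilityMeasure ν]
    (h_weak : ∀ f : BoundedContinuousFunction ℝ ℝ,
      Tendsto (fun n : ℕ => (n : ℝ)⁻¹ * ∑ i : Fin n, f (b n i)) atTop
        (nhds (∫ x, f x ∂ν)))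
    (h_ui : ∀ ε : ℝ, 0 < ε → ∃ t : ℝ, ∀ n : ℕ,
      (n : ℝ)⁻¹ * ∑ i ∈ Finset.univ.filter
        (fun i : Fin n => t < |Real.log (b n i)|), |Real.log (b n i)| ≤ ε) :
    (∀ ε : ℝ, 0 < ε → ∃ t : ℝ, ∀ n : ℕ,
      (n : ℝ)⁻¹ * ∑ i ∈ Finset.univ.filter
        (fun i : Fin n => t < |Real.log (a n i)|), |Real.log (a n i)| ≤ ε) ∧
    (∀ᶠ n : ℕ in atTop,
      (n : ℝ)⁻¹ * ∑ i : Fin n, Real.log (a n i) =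
        (n : ℝ)⁻¹ * ∑ i : Fin n, Real.log (b n i)) ∧
    Tendsto (fun n : ℕ => (n : ℝ)⁻¹ * ∑ i : Fin n, Real.log (b n i)) atTop
      (nhds (∫ x, Real.log x ∂ν)) ∧
    (∀ μ : Measure ℝ, IsProbabilityMeasure μ →
      (∃ φ : ℕ → ℕ, StrictMono φ ∧ ∀ f : BoundedContinuousFunction ℝ ℝ,
        Tendsto (fun m : ℕ => ((φ m : ℝ))⁻¹ * ∑ i : Fin (φ m), f (a (φ m) i)) atTop
          (nhds (∫ x, f x ∂μ))) →
      ∫ x, Real.log x ∂μ = ∫ x, Real.log x ∂ν) := by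
  have h_prod : ∀ᶠ n in atTop, ∏ i, a n i = ∏ i, b n i := by
    filter_upwards [h_maj, h_maj'] with n h h'
    have h₁ := h n
    have h₂ := h' 0
    simp only [Fin.filter_val_lt_eq_univ le_rfl, zero_le, filter_true] at h₁ h₂
    exact le_antisymm h₁ h₂
  have h_avg : ∀ᶠ n in atTop, empAvg Real.log (a n) = empAvg Real.log (b n) := by
    filter_upwards [h_prod] with n h
    rw [empAvg, empAvg, ← Real.log_prod fun i _ => (ha_pos n i).ne',
      ← Real.log_prod fun i _ => (hb_pos n i).ne', h]
  have hUI_a : UnifIntegrableEmpirical Real.log a :=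
    UnifIntegrableEmpirical.of_sum_posPart_le h_ui <| by
      filter_upwards [h_mono, h_maj, h_prod] with n hm hk hp using
        sum_posPart_abs_log_sub_le_of_prod_le (ha_pos n) (hb_pos n) hm.1 hk hp
  have hb_lim := TendstoEmpirical.tendsto_empAvg_log h_weak (fun n i => (hb_pos n i).ne') h_ui
  refine ⟨hUI_a, h_avg, hb_lim, ?_⟩
  rintro μ hμ ⟨φ, hφ, hconv⟩
  have ha_lim := TendstoEmpirical.tendsto_empAvg_log (c := fun m => a (φ m)) hconv
    (fun m i => (ha_pos _ i).ne') fun ε hε => (hUI_a ε hε).imp fun t ht m => ht (φ m)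
  exact tendsto_nhds_unique ha_lim <| (hb_lim.comp hφ.tendsto_atTop).congr'
    ((hφ.tendsto_atTop.eventually h_avg).mono fun m h => h.symm)
end

section
/- Rows and operator norm of the inverse: let A ∈ M_n(ℂ) have rows R_1, …, R_n ∈ ℂ^n, and for each i let R_{−i} := span{R_j : j ≠ i}. Then n^{-1/2} min_{1≤i≤n} dist(R_i, R_{−i}) ≤ s_n(A) ≤ min_{1≤i≤n} dist(R_i, R_{−i}), where s_n(A) = min_{‖x‖₂=1} ‖Ax‖₂ is the smallest singular value of A. -/
/-!
Write `ν_i` for the component of the row `R_i` orthogonal to `R_{-i}`, so that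
`‖ν_i‖ = dist(R_i, R_{-i})` and `⟪R_j, ν_i⟫ = δ_ij ‖ν_i‖²`.

Upper bound: since `dim R_{-i} < n` there is a unit vector `u ⊥ R_{-i}`; then `A ū` has the single
nonzero entry `conj ⟪R_i, u⟫ = conj ⟪R_i - w, u⟫` (any `w ∈ R_{-i}`), so
`s_n(A) ≤ ‖A ū‖ ≤ dist(R_i, R_{-i})`.

Lower bound: if every distance is at least `d > 0`, the vectors `conj ν_i / ‖ν_i‖²` are the
columns of a right, hence two-sided, inverse `B` of `A`. Then `x = B (A x) = ∑_i (A x)_i B e_i`,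
and Cauchy–Schwarz gives `‖x‖ ≤ (∑_i ‖ν_i‖⁻²)^{1/2} ‖A x‖ ≤ (√n / d) ‖A x‖`.
-/

open MeasureTheory

/-- A vector of `ℂ^n` seen in the Euclidean (ℓ²) space. -/
noncomputable def toEuc {n : ℕ} (v : Fin n → ℂ) : EuclideanSpace ℂ (Fin n) :=
  (WithLp.equiv 2 (Fin n → ℂ)).symm v

/-- The smallest singular value of `A ∈ M_n(ℂ)`, characterized as
`s_n(A) = min_{‖x‖₂ = 1} ‖A x‖₂`. -/
noncomputable def sMin {n : ℕ} (A : Matrix (Fin n) (Fin n) ℂ) : ℝ :=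
  ⨅ x : {x : EuclideanSpace ℂ (Fin n) // ‖x‖ = 1},
    ‖toEuc (A.mulVec ((WithLp.equiv 2 (Fin n → ℂ)) x.1))‖

open Metric Module Matrix
open scoped InnerProductSpace

section SpanExcept

variable {𝕜 E ι : Type*} [RCLike 𝕜] [NormedAddCommGroup E] [InnerProductSpace 𝕜 E]

theorem Submodule.norm_sub_starProjection_eq_infDist (K : Submodule 𝕜 E)
    [K.HasOrthogonalProjection] (v : E) : ‖v - K.starProjection v‖ = infDist v K := by
  rw [starProjection_minimal, infDist_eq_iInf]
  simp [dist_eq_norm]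

theorem Submodule.norm_inner_le_infDist_mul_norm {K : Submodule 𝕜 E} [K.HasOrthogonalProjection]
    {u : E} (hu : u ∈ Kᗮ) (v : E) : ‖⟪v, u⟫_𝕜‖ ≤ infDist v K * ‖u‖ :=
  calc ‖⟪v, u⟫_𝕜‖ = ‖⟪v - K.starProjection v, u⟫_𝕜‖ := by
        rw [inner_sub_left, inner_right_of_mem_orthogonal (K.starProjection_apply_mem v) hu,
          sub_zero]
    _ ≤ ‖v - K.starProjection v‖ * ‖u‖ := norm_inner_le_norm _ _
    _ = infDist v K * ‖u‖ := by rw [K.norm_sub_starProjection_eq_infDist]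

theorem norm_sum_smul_le [Fintype ι] (b : ι → 𝕜) (u : ι → E) :
    ‖∑ i, b i • u i‖ ≤ √(∑ i, ‖b i‖ ^ 2) * √(∑ i, ‖u i‖ ^ 2) :=
  calc ‖∑ i, b i • u i‖ ≤ ∑ i, ‖b i‖ * ‖u i‖ := by
        simpa only [norm_smul] using norm_sum_le Finset.univ fun i => b i • u i
    _ ≤ √(∑ i, ‖b i‖ ^ 2) * √(∑ i, ‖u i‖ ^ 2) := Real.sum_mul_le_sqrt_mul_sqrt _ _ _

variable (𝕜) in
def spanExcept (v : ι → E) (i : ι) : Submodule 𝕜 E := Submodule.span 𝕜 (v '' {j | j ≠ i})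

theorem mem_spanExcept (v : ι → E) {i j : ι} (hji : j ≠ i) : v j ∈ spanExcept 𝕜 v i :=
  Submodule.subset_span (Set.mem_image_of_mem v hji)

variable (𝕜) in
theorem exists_norm_eq_one_mem_orthogonal_spanExcept [FiniteDimensional 𝕜 E] [Fintype ι]
    (hcard : Fintype.card ι ≤ finrank 𝕜 E) (v : ι → E) (i : ι) :
    ∃ u, ‖u‖ = 1 ∧ u ∈ (spanExcept 𝕜 v i)ᗮ := by
  classical
  have hrank : finrank 𝕜 (spanExcept 𝕜 v i) < finrank 𝕜 E :=
    calc finrank 𝕜 (spanExcept 𝕜 v i) ≤ Fintype.card {j // j ≠ i} := by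
          rw [spanExcept, Set.image_eq_range]; exact finrank_range_le_card _
      _ < Fintype.card ι := Fintype.card_subtype_lt (p := (· ≠ i)) (not_not.mpr rfl)
      _ ≤ finrank 𝕜 E := hcard
  have hne : (spanExcept 𝕜 v i)ᗮ ≠ ⊥ := by
    rw [Ne, Submodule.orthogonal_eq_bot_iff]
    rintro htop
    rw [htop, finrank_top] at hrank
    exact hrank.false
  obtain ⟨y, hy, hy0⟩ := Submodule.exists_mem_ne_zero_of_ne_bot hne
  exact ⟨(‖y‖ : 𝕜)⁻¹ • y, norm_smul_inv_norm hy0, Submodule.smul_mem _ _ hy⟩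

variable [FiniteDimensional 𝕜 E]

variable (𝕜) in
noncomputable def residualExcept (v : ι → E) (i : ι) : E :=
  v i - (spanExcept 𝕜 v i).starProjection (v i)

theorem norm_residualExcept (v : ι → E) (i : ι) :
    ‖residualExcept 𝕜 v i‖ = infDist (v i) (spanExcept 𝕜 v i) :=
  Submodule.norm_sub_starProjection_eq_infDist _ _

theorem residualExcept_mem_orthogonal (v : ι → E) (i : ι) :
    residualExcept 𝕜 v i ∈ (spanExcept 𝕜 v i)ᗮ :=
  Submodule.sub_starProjection_mem_orthogonal _

theorem inner_residualExcept_of_ne (v : ι → E) {i j : ι} (hji : j ≠ i) :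
    ⟪v j, residualExcept 𝕜 v i⟫_𝕜 = 0 :=
  Submodule.inner_right_of_mem_orthogonal (mem_spanExcept v hji)
    (residualExcept_mem_orthogonal v i)

theorem inner_residualExcept_self (v : ι → E) (i : ι) :
    ⟪v i, residualExcept 𝕜 v i⟫_𝕜 = (‖residualExcept 𝕜 v i‖ : 𝕜) ^ 2 := by
  set K := spanExcept 𝕜 v i
  calc ⟪v i, residualExcept 𝕜 v i⟫_𝕜
      = ⟪residualExcept 𝕜 v i + K.starProjection (v i), residualExcept 𝕜 v i⟫_𝕜 := by
        rw [residualExcept, sub_add_cancel]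
    _ = ⟪residualExcept 𝕜 v i, residualExcept 𝕜 v i⟫_𝕜 := by
        rw [inner_add_left, Submodule.inner_right_of_mem_orthogonal (K.starProjection_apply_mem _)
          (residualExcept_mem_orthogonal v i), add_zero]
    _ = (‖residualExcept 𝕜 v i‖ : 𝕜) ^ 2 := inner_self_eq_norm_sq_to_K _

end SpanExcept

section Matrix

variable {m n : ℕ}

noncomputable abbrev rowVec (A : Matrix (Fin m) (Fin n) ℂ) (j : Fin m) : EuclideanSpace ℂ (Fin n) :=
  toEuc (A j)

theorem norm_toEuc_star (y : EuclideanSpace ℂ (Fin n)) : ‖toEuc fun k => star (y k)‖ = ‖y‖ := by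
  simp [toEuc, EuclideanSpace.norm_eq]

theorem mulVec_star_apply (A : Matrix (Fin m) (Fin n) ℂ) (y : EuclideanSpace ℂ (Fin n))
    (j : Fin m) : (A *ᵥ fun k => star (y k)) j = star ⟪rowVec A j, y⟫_ℂ := by
  simp [mulVec, dotProduct, PiLp.inner_apply, toEuc, mul_comm]

theorem norm_le_sqrt_sum_norm_rowVec_sq_mul {A C : Matrix (Fin m) (Fin n) ℂ}
    (hCA : Cᵀ * A = 1) (z : Fin n → ℂ) :
    ‖toEuc z‖ ≤ √(∑ i, ‖rowVec C i‖ ^ 2) * ‖toEuc (A *ᵥ z)‖ := by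
  have hz : toEuc z = ∑ i, (A *ᵥ z) i • rowVec C i := by
    conv_lhs => rw [← one_mulVec z, ← hCA, ← mulVec_mulVec, mulVec_transpose, vecMul_eq_sum]
    simp [toEuc]
  rw [hz, mul_comm, EuclideanSpace.norm_eq (toEuc (A *ᵥ z))]
  exact norm_sum_smul_le _ _

noncomputable def dualRows (A : Matrix (Fin m) (Fin n) ℂ) : Matrix (Fin m) (Fin n) ℂ :=
  of fun i => ((‖residualExcept ℂ (rowVec A) i‖ : ℂ) ^ 2)⁻¹ •
    fun k => star (residualExcept ℂ (rowVec A) i k)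

theorem norm_rowVec_dualRows (A : Matrix (Fin m) (Fin n) ℂ) (i : Fin m) :
    ‖rowVec (dualRows A) i‖ = ‖residualExcept ℂ (rowVec A) i‖⁻¹ := by
  set ν := residualExcept ℂ (rowVec A) i
  calc ‖rowVec (dualRows A) i‖ = ‖((‖ν‖ : ℂ) ^ 2)⁻¹ • toEuc fun k => star (ν k)‖ := rfl
    _ = ‖ν‖⁻¹ := by
        rw [norm_smul, norm_toEuc_star, norm_inv, norm_pow, Complex.norm_real, norm_norm]
        field_simp

theorem mul_transpose_dualRows (A : Matrix (Fin m) (Fin n) ℂ)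
    (h : ∀ i, residualExcept ℂ (rowVec A) i ≠ 0) : A * (dualRows A)ᵀ = 1 := by
  ext j i
  set ν := residualExcept ℂ (rowVec A) i
  have hentry : (A * (dualRows A)ᵀ) j i = ((‖ν‖ : ℂ) ^ 2)⁻¹ * (A *ᵥ fun k => star (ν k)) j := by
    simp [ν, dualRows, mul_apply, mulVec, dotProduct, Finset.mul_sum, mul_left_comm]
  rw [hentry, mulVec_star_apply, one_apply]
  rcases eq_or_ne j i with rfl | hji
  · have hν : (‖ν‖ : ℂ) ^ 2 ≠ 0 := by simpa using h j
    rw [inner_residualExcept_self, if_pos rfl, star_pow, RCLike.star_def, RCLike.conj_ofReal]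
    exact inv_mul_cancel₀ hν
  · rw [inner_residualExcept_of_ne _ hji, if_neg hji, star_zero, mul_zero]

variable (A : Matrix (Fin n) (Fin n) ℂ)

theorem sMin_nonneg : 0 ≤ sMin A := Real.iInf_nonneg fun _ => norm_nonneg _

theorem sMin_le_norm_mulVec {z : Fin n → ℂ} (hz : ‖toEuc z‖ = 1) : sMin A ≤ ‖toEuc (A *ᵥ z)‖ :=
  ciInf_le ⟨0, Set.forall_mem_range.2 fun _ => norm_nonneg _⟩
    (⟨toEuc z, hz⟩ : {x : EuclideanSpace ℂ (Fin n) // ‖x‖ = 1})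

theorem le_sMin (hn : 0 < n) {c : ℝ}
    (h : ∀ z : Fin n → ℂ, ‖toEuc z‖ = 1 → c ≤ ‖toEuc (A *ᵥ z)‖) : c ≤ sMin A :=
  have : Nonempty {x : EuclideanSpace ℂ (Fin n) // ‖x‖ = 1} :=
    ⟨⟨EuclideanSpace.single ⟨0, hn⟩ 1, by simp⟩⟩
  le_ciInf fun x => h _ x.2

theorem sMin_le_infDist (i : Fin n) :
    sMin A ≤ infDist (rowVec A i) (spanExcept ℂ (rowVec A) i) := by
  obtain ⟨u, hu1, hu⟩ := exists_norm_eq_one_mem_orthogonal_spanExcept ℂ (by simp) (rowVec A) i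
  have hAu : (A *ᵥ fun k => star (u k)) = Pi.single i (star ⟪rowVec A i, u⟫_ℂ) := by
    funext j
    rw [mulVec_star_apply]
    rcases eq_or_ne j i with rfl | hji
    · simp
    · rw [Pi.single_eq_of_ne hji,
        Submodule.inner_right_of_mem_orthogonal (mem_spanExcept _ hji) hu, star_zero]
  calc sMin A ≤ ‖toEuc (A *ᵥ fun k => star (u k))‖ :=
        sMin_le_norm_mulVec A (by rw [norm_toEuc_star, hu1])
    _ = ‖⟪rowVec A i, u⟫_ℂ‖ := by rw [hAu]; simp [toEuc, norm_inner_symm]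
    _ ≤ infDist (rowVec A i) (spanExcept ℂ (rowVec A) i) * ‖u‖ :=
        Submodule.norm_inner_le_infDist_mul_norm hu _
    _ = _ := by rw [hu1, mul_one]

theorem inv_sqrt_mul_le_sMin (hn : 0 < n) {d : ℝ} (hd : 0 < d)
    (hdist : ∀ i, d ≤ infDist (rowVec A i) (spanExcept ℂ (rowVec A) i)) :
    (√n)⁻¹ * d ≤ sMin A := by
  have hν : ∀ i, d ≤ ‖residualExcept ℂ (rowVec A) i‖ := fun i =>
    (hdist i).trans_eq (norm_residualExcept _ i).symm
  have hAC := mul_transpose_dualRows A fun i => norm_pos_iff.1 (hd.trans_le (hν i))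
  have hC : √(∑ i, ‖rowVec (dualRows A) i‖ ^ 2) ≤ √n * d⁻¹ :=
    calc √(∑ i, ‖rowVec (dualRows A) i‖ ^ 2) ≤ √(∑ _i : Fin n, d⁻¹ ^ 2) := by
          gcongr with i
          exact (norm_rowVec_dualRows A i).trans_le (inv_anti₀ hd (hν i))
      _ = √n * d⁻¹ := by
          rw [Finset.sum_const, Finset.card_univ, Fintype.card_fin, nsmul_eq_mul,
            Real.sqrt_mul n.cast_nonneg, Real.sqrt_sq (inv_nonneg.2 hd.le)]
  refine le_sMin A hn fun z hz => ?_
  have hAz := norm_le_sqrt_sum_norm_rowVec_sq_mul (mul_eq_one_comm.mp hAC) z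
  calc (√n)⁻¹ * d = (√n)⁻¹ * d * ‖toEuc z‖ := by rw [hz, mul_one]
    _ ≤ (√n)⁻¹ * d * (√n * d⁻¹ * ‖toEuc (A *ᵥ z)‖) := by
        gcongr
        exact hAz.trans (by gcongr)
    _ = ‖toEuc (A *ᵥ z)‖ := by field_simp

end Matrix

/-- Rows and operator norm of the inverse: for `A ∈ M_n(ℂ)` with rows `R_1, …, R_n` and
`R_{-i} = span{R_j : j ≠ i}`, one has
`n^{-1/2} min_i dist(R_i, R_{-i}) ≤ s_n(A) ≤ min_i dist(R_i, R_{-i})`,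
where `s_n(A) = min_{‖x‖₂=1} ‖Ax‖₂` is the smallest singular value of `A`. -/
theorem rows_and_operator_norm_of_inverse {n : ℕ} (hn : 0 < n)
    (A : Matrix (Fin n) (Fin n) ℂ) :
    (Real.sqrt n)⁻¹ *
        (⨅ i : Fin n, Metric.infDist (toEuc (A i))
          ↑(Submodule.span ℂ ((fun j => toEuc (A j)) '' {j | j ≠ i}))) ≤ sMin A ∧
      sMin A ≤
        ⨅ i : Fin n, Metric.infDist (toEuc (A i))
          ↑(Submodule.span ℂ ((fun j => toEuc (A j)) '' {j | j ≠ i})) := by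
  set d : Fin n → ℝ := fun i => infDist (rowVec A i) (spanExcept ℂ (rowVec A) i)
  change (√n)⁻¹ * ⨅ i, d i ≤ sMin A ∧ sMin A ≤ ⨅ i, d i
  have : Nonempty (Fin n) := ⟨⟨0, hn⟩⟩
  refine ⟨?_, le_ciInf (sMin_le_infDist A)⟩
  have hd : ∀ i, 0 ≤ d i := fun _ => infDist_nonneg
  rcases (Real.iInf_nonneg hd).eq_or_lt with h | h
  · rw [← h, mul_zero]
    exact sMin_nonneg A
  · exact inv_sqrt_mul_le_sMin A hn h (ciInf_le ⟨0, Set.forall_mem_range.2 hd⟩)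
end

section
/- Invertibility via average distance: fix δ, ρ ∈ (0,1) and n ≥ 2/δ. Let A be a random matrix with values in M_n(ℂ), with columns C_1, …, C_n, and for each k let H_k := span{C_j : j ≠ k}. Then for every t ≥ 0, P( min_{x ∈ Incomp} ‖Ax‖₂ ≤ t ρ / √n ) ≤ (2/(δ n)) ∑_{k=1}^n P( dist(C_k, H_k) ≤ t ). -/
open MeasureTheory ProbabilityTheory
open scoped Classical

/-- The set of `δn`-sparse vectors of `ℂ^n`. -/
noncomputable def sparseSet (n : ℕ) (δ : ℝ) : Set (EuclideanSpace ℂ (Fin n)) :=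
  {x | ((Finset.univ.filter fun i : Fin n => x i ≠ 0).card : ℝ) ≤ δ * n}

/-- The set of incompressible unit vectors of `ℂ^n`: unit vectors at ℓ²-distance greater
than `ρ` from the set of `δn`-sparse vectors. -/
noncomputable def incompSet (n : ℕ) (δ ρ : ℝ) : Set (EuclideanSpace ℂ (Fin n)) :=
  {x | ‖x‖ = 1 ∧ ρ < Metric.infDist x (sparseSet n δ)}

/-!
An incompressible unit vector has more than `δn` coordinates of modulus greater than `ρ/√n`:
otherwise truncating it to those coordinates gives a sparse vector within distance `ρ`.
For each such coordinate `k`, passing `Ax = ∑ x_j C_j` to the quotient `ℂⁿ ⧸ H_k` gives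
`|x_k| dist(C_k, H_k) ≤ ‖Ax‖`, so `dist(C_k, H_k) ≤ t` whenever `‖Ax‖ ≤ tρ/√n`. Thus the event
forces more than `δn` of the events `dist(C_k, H_k) ≤ t`, and Markov's inequality for the number
of these events gives the bound.
-/

open Finset Metric
open scoped ENNReal

theorem norm_mul_infDist_span_le_norm_sum {𝕜 E ι : Type*} [NormedField 𝕜] [SeminormedAddCommGroup E]
    [NormedSpace 𝕜 E] [Fintype ι] (v : ι → E) (c : ι → 𝕜) (k : ι) :
    ‖c k‖ * infDist (v k) (Submodule.span 𝕜 (v '' {j | j ≠ k})) ≤ ‖∑ j, c j • v j‖ := by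
  set H := Submodule.span 𝕜 (v '' {j | j ≠ k})
  have hmk : H.mkQ (∑ j, c j • v j) = c k • H.mkQ (v k) := by
    rw [map_sum, Finset.sum_eq_single k, map_smul]
    · intro j _ hj
      rw [map_smul, Submodule.mkQ_apply, (Submodule.Quotient.mk_eq_zero H).2
        (Submodule.subset_span ⟨j, hj, rfl⟩), smul_zero]
    · simp
  calc ‖c k‖ * infDist (v k) H = ‖c k • H.mkQ (v k)‖ := by
        rw [norm_smul, Submodule.mkQ_apply]
        exact congrArg _ (QuotientAddGroup.norm_mk (S := H.toAddSubgroup) (v k)).symm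
    _ ≤ ‖∑ j, c j • v j‖ := hmk ▸ Submodule.Quotient.norm_mk_le _ _

theorem EuclideanSpace.norm_le_sqrt_card_mul {𝕜 ι : Type*} [RCLike 𝕜] [Fintype ι]
    {z : EuclideanSpace 𝕜 ι} {s : ℝ} (hs : 0 ≤ s) (hz : ∀ i, ‖z i‖ ≤ s) :
    ‖z‖ ≤ √(Fintype.card ι) * s := by
  calc ‖z‖ = √(∑ i, ‖z i‖ ^ 2) := EuclideanSpace.norm_eq z
    _ ≤ √(∑ _ : ι, s ^ 2) := by gcongr with i; exact hz i
    _ = √(Fintype.card ι) * s := by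
      rw [sum_const, card_univ, nsmul_eq_mul, Real.sqrt_mul (by positivity), Real.sqrt_sq hs]

theorem toEuc_mulVec {m n : ℕ} (M : Matrix (Fin m) (Fin n) ℂ) (v : Fin n → ℂ) :
    toEuc (M.mulVec v) = ∑ j, v j • toEuc fun i => M i j := by
  ext i
  simp [toEuc, Matrix.mulVec, dotProduct, mul_comm]

theorem infDist_span_le_of_lt_norm {𝕜 E ι : Type*} [NormedField 𝕜] [SeminormedAddCommGroup E]
    [NormedSpace 𝕜 E] [Fintype ι] {v : ι → E} {c : ι → 𝕜} {k : ι} {s t : ℝ} (hs : 0 < s)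
    (hk : s < ‖c k‖) (h : ‖∑ j, c j • v j‖ ≤ t * s) :
    infDist (v k) (Submodule.span 𝕜 (v '' {j | j ≠ k})) ≤ t := by
  refine le_of_mul_le_mul_right ?_ hs
  calc infDist (v k) (Submodule.span 𝕜 (v '' {j | j ≠ k})) * s
      ≤ ‖c k‖ * infDist (v k) (Submodule.span 𝕜 (v '' {j | j ≠ k})) := by
        rw [mul_comm]; gcongr; exact infDist_nonneg
    _ ≤ t * s := (norm_mul_infDist_span_le_norm_sum v c k).trans h

theorem pos_of_mem_incompSet {n : ℕ} {δ ρ : ℝ} {x : EuclideanSpace ℂ (Fin n)}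
    (hx : x ∈ incompSet n δ ρ) : 0 < n := by
  rcases n with _ | n
  · simp [Subsingleton.elim x 0, incompSet] at hx
  · exact n.succ_pos

theorem lt_card_norm_gt_of_mem_incompSet {n : ℕ} {δ ρ : ℝ} (hρ : 0 ≤ ρ)
    {x : EuclideanSpace ℂ (Fin n)} (hx : x ∈ incompSet n δ ρ) :
    δ * n < #{k | ρ / √n < ‖x k‖} := by
  have hn : (0 : ℝ) < n := Nat.cast_pos.2 (pos_of_mem_incompSet hx)
  by_contra! hcard
  set y : EuclideanSpace ℂ (Fin n) := WithLp.toLp 2 fun k => if ρ / √n < ‖x k‖ then x k else 0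
  have hy : y ∈ sparseSet n δ := by
    refine le_trans ?_ hcard
    exact_mod_cast card_le_card fun k hk => by by_contra h; simp_all [y]
  have hxy : dist x y ≤ ρ := by
    rw [dist_eq_norm]
    refine (EuclideanSpace.norm_le_sqrt_card_mul (s := ρ / √n) (by positivity)
      fun k => ?_).trans_eq ?_
    · by_cases hk : ρ / √n < ‖x k‖
      · simp [y, hk]; positivity
      · simp [y, hk]
        exact not_lt.1 hk
    · rw [Fintype.card_fin]; exact mul_div_cancel₀ ρ (Real.sqrt_pos.2 hn).ne'
  exact hx.2.not_ge ((infDist_le_dist_of_mem hy).trans hxy)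

theorem measure_le_card_mem_le_sum_div {Ω ι : Type*} [MeasurableSpace Ω] [Fintype ι]
    (μ : Measure Ω) (E : ι → Set Ω) {c : ℝ≥0∞} (hc : c ≠ 0) (hc' : c ≠ ∞) :
    μ {ω | c ≤ #{k | ω ∈ E k}} ≤ (∑ k, μ (E k)) / c := by
  -- The `E k` need not be measurable; their measurable hulls have the same measure.
  set F := fun k => toMeasurable μ (E k)
  have hF : ∀ k, MeasurableSet (F k) := fun k => measurableSet_toMeasurable μ (E k)
  calc μ {ω | c ≤ #{k | ω ∈ E k}}
      ≤ μ {ω | c ≤ ∑ k, (F k).indicator 1 ω} := by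
        refine measure_mono fun ω (hω : c ≤ _) => show c ≤ _ from hω.trans ?_
        rw [card_filter]
        push_cast
        gcongr with k
        by_cases h : ω ∈ E k
        · simp [h, F, subset_toMeasurable μ (E k) h]
        · simp [h]
    _ ≤ (∫⁻ ω, ∑ k, (F k).indicator 1 ω ∂μ) / c :=
        meas_ge_le_lintegral_div (by fun_prop (disch := exact hF _)) hc hc'
    _ = (∑ k, μ (E k)) / c := by
        rw [lintegral_finsetSum _ fun k _ => measurable_one.indicator (hF k)]
        simp [lintegral_indicator_one (hF _), measure_toMeasurable, F]

theorem invertibility_via_average_distance_general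
    {Ω : Type*} [MeasureSpace Ω]
    {n : ℕ} (δ ρ : ℝ) (hδ : δ ∈ Set.Ioo (0 : ℝ) 1) (hρ : ρ ∈ Set.Ioo (0 : ℝ) 1)
    (A : Ω → Fin n → Fin n → ℂ)
    (t : ℝ) :
    ℙ {ω | ∃ x ∈ incompSet n δ ρ,
        ‖toEuc ((Matrix.of (A ω)).mulVec ((WithLp.equiv 2 (Fin n → ℂ)) x))‖ ≤
          t * ρ / Real.sqrt n} ≤
      ENNReal.ofReal (2 / (δ * n)) *
        ∑ k : Fin n,
          ℙ {ω | Metric.infDist (toEuc fun i => A ω i k)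
              ↑(Submodule.span ℂ ((fun j => toEuc fun i => A ω i j) '' {j | j ≠ k})) ≤ t} := by
  set E : Fin n → Set Ω := fun k => {ω | infDist (toEuc fun i => A ω i k)
    (Submodule.span ℂ ((fun j => toEuc fun i => A ω i j) '' {j | j ≠ k})) ≤ t}
  have hsub : {ω | ∃ x ∈ incompSet n δ ρ,
      ‖toEuc ((Matrix.of (A ω)).mulVec ((WithLp.equiv 2 (Fin n → ℂ)) x))‖ ≤ t * ρ / √n} ⊆
      {ω | δ * n < #{k | ω ∈ E k}} := by
    rintro ω ⟨x, hx, hAx⟩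
    rw [toEuc_mulVec, mul_div_assoc] at hAx
    refine (lt_card_norm_gt_of_mem_incompSet hρ.1.le hx).trans_le ?_
    have hn : (0 : ℝ) < n := Nat.cast_pos.2 (pos_of_mem_incompSet hx)
    exact_mod_cast card_le_card fun k hk => by
      simp only [mem_filter_univ] at hk ⊢
      exact infDist_span_le_of_lt_norm (div_pos hρ.1 (Real.sqrt_pos.2 hn)) hk hAx
  refine (measure_mono hsub).trans ?_
  rcases n.eq_zero_or_pos with rfl | hn
  · simp
  have hδn : 0 < δ * n := mul_pos hδ.1 (Nat.cast_pos.2 hn)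
  calc ℙ {ω | δ * n < #{k | ω ∈ E k}}
      ≤ ℙ {ω | ENNReal.ofReal (δ * n) ≤ #{k | ω ∈ E k}} := measure_mono fun ω hω =>
        (ENNReal.ofReal_le_ofReal (le_of_lt hω)).trans_eq (ENNReal.ofReal_natCast _)
    _ ≤ (∑ k, ℙ (E k)) / ENNReal.ofReal (δ * n) :=
        measure_le_card_mem_le_sum_div ℙ E (by simpa using hδn) ENNReal.ofReal_ne_top
    _ = ENNReal.ofReal (1 / (δ * n)) * ∑ k, ℙ (E k) := by
        rw [ENNReal.div_eq_inv_mul, one_div, ENNReal.ofReal_inv_of_pos hδn]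
    _ ≤ ENNReal.ofReal (2 / (δ * n)) * ∑ k, ℙ (E k) := by gcongr; norm_num

/-- Invertibility via average distance: for `δ, ρ ∈ (0,1)` and `n ≥ 2/δ`, a random matrix
`A` with columns `C_1, …, C_n` and `H_k = span{C_j : j ≠ k}` satisfies, for every `t ≥ 0`,
`P(min_{x ∈ Incomp} ‖Ax‖₂ ≤ tρ/√n) ≤ (2/(δn)) ∑_k P(dist(C_k, H_k) ≤ t)`. -/
theorem invertibility_via_average_distance
    {Ω : Type*} [MeasureSpace Ω] [IsProbabilityMeasure (ℙ : Measure Ω)]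
    {n : ℕ} (δ ρ : ℝ) (hδ : δ ∈ Set.Ioo (0 : ℝ) 1) (hρ : ρ ∈ Set.Ioo (0 : ℝ) 1)
    (hn : 2 / δ ≤ (n : ℝ))
    (A : Ω → Fin n → Fin n → ℂ) (hA : Measurable A)
    (t : ℝ) (ht : 0 ≤ t) :
    ℙ {ω | ∃ x ∈ incompSet n δ ρ,
        ‖toEuc ((Matrix.of (A ω)).mulVec ((WithLp.equiv 2 (Fin n → ℂ)) x))‖ ≤
          t * ρ / Real.sqrt n} ≤
      ENNReal.ofReal (2 / (δ * n)) *
        ∑ k : Fin n,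
          ℙ {ω | Metric.infDist (toEuc fun i => A ω i k)
              ↑(Submodule.span ℂ ((fun j => toEuc fun i => A ω i j) '' {j | j ≠ k})) ≤ t} :=
  invertibility_via_average_distance_general δ ρ hδ hρ A t
end
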